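/- arXiv:1710.02104 — 9 statements merged into one kernel-verified Lean document; each statement's English description precedes it below -/
import Mathlib

section
/- Let H be a real Hilbert space, u ∈ H, and let O_1, …, O_N be complete (closed) subspaces of H satisfying the partition-of-unity stability property with constant c_pu > 0. Let W be a finite-dimensional subspace of H, set e := u − P_W u, and let k ∈ {1,…,N} be an index such that ‖P_{O_k} e‖ ≥ ‖P_{O_i} e‖ for all i = 1,…,N. Let W' := W + span{P_{O_k} e}. Then ‖u − P_{W'} u‖ ≤ c · ‖u − P_W u‖, where c := sqrt(1 − 1/(N · c_pu²)). -/
/-!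
The error `e = u - P_W u` is reduced at least by the enrichment `v = P_{O_k} e` itself, since
`P_W u + v ∈ W'` and `e - v ⊥ v`; hence `‖u - P_{W'} u‖² ≤ ‖e‖² - ‖v‖²`. Testing `e` against a
stable decomposition `e = ∑ ψ_i` gives `‖e‖² = ∑ ⟪P_{O_i} e, ψ_i⟫ ≤ ‖v‖ ∑ ‖ψ_i‖`, and
Cauchy–Schwarz with the stability bound turns this into `‖e‖² ≤ N c_pu² ‖v‖²`.
-/

open Finset

namespace Submodule

variable {𝕜 E : Type*} [RCLike 𝕜] [NormedAddCommGroup E] [InnerProductSpace 𝕜 E]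

theorem norm_sub_starProjection_le {K : Submodule 𝕜 E} [K.HasOrthogonalProjection] (v : E)
    {w : E} (hw : w ∈ K) : ‖v - K.starProjection v‖ ≤ ‖v - w‖ :=
  (starProjection_minimal v).trans_le <|
    ciInf_le ⟨0, by rintro _ ⟨x, rfl⟩; positivity⟩ (⟨w, hw⟩ : K)

theorem norm_sq_sub_starProjection (K : Submodule 𝕜 E) [K.HasOrthogonalProjection] (v : E) :
    ‖v - K.starProjection v‖ ^ 2 = ‖v‖ ^ 2 - ‖K.starProjection v‖ ^ 2 := by
  rw [K.norm_sq_eq_add_norm_sq_starProjection v, starProjection_orthogonal_val]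
  ring

theorem norm_sub_starProjection_sup_span_le (K : Submodule 𝕜 E) [K.HasOrthogonalProjection]
    (u x : E) [(K ⊔ span 𝕜 {x}).HasOrthogonalProjection] :
    ‖u - (K ⊔ span 𝕜 {x}).starProjection u‖ ≤ ‖u - K.starProjection u - x‖ := by
  rw [sub_sub]
  exact norm_sub_starProjection_le u
    (add_mem_sup (K.starProjection_apply_mem u) (mem_span_singleton_self x))

end Submodule

section StableDecomposition

variable {E ι : Type*} [NormedAddCommGroup E] [InnerProductSpace ℝ E] [Fintype ι]
  {O : ι → Submodule ℝ E} [∀ i, (O i).HasOrthogonalProjection] {φ : E} {ψ : ι → E} {M : ℝ}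

theorem sq_norm_le_mul_sum_norm_of_sum_eq (hψO : ∀ i, ψ i ∈ O i) (hψ : ∑ i, ψ i = φ)
    (hM : ∀ i, ‖(O i).starProjection φ‖ ≤ M) : ‖φ‖ ^ 2 ≤ M * ∑ i, ‖ψ i‖ :=
  calc ‖φ‖ ^ 2 = ∑ i, inner ℝ φ (ψ i) := by rw [← inner_sum, hψ, real_inner_self_eq_norm_sq]
    _ = ∑ i, inner ℝ ((O i).starProjection φ) (ψ i) := by
      refine sum_congr rfl fun i _ => ?_
      rw [Submodule.inner_starProjection_left_eq_right,
        Submodule.starProjection_eq_self_iff.mpr (hψO i)]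
    _ ≤ ∑ i, M * ‖ψ i‖ := sum_le_sum fun i _ =>
      (real_inner_le_norm _ _).trans (mul_le_mul_of_nonneg_right (hM i) (norm_nonneg _))
    _ = M * ∑ i, ‖ψ i‖ := (mul_sum _ _ _).symm

theorem sq_norm_le_card_mul_of_stable_decomposition {c : ℝ} (hψO : ∀ i, ψ i ∈ O i)
    (hψ : ∑ i, ψ i = φ) (hstab : ∑ i, ‖ψ i‖ ^ 2 ≤ c ^ 2 * ‖φ‖ ^ 2)
    (hM : ∀ i, ‖(O i).starProjection φ‖ ≤ M) :
    ‖φ‖ ^ 2 ≤ Fintype.card ι * c ^ 2 * M ^ 2 := by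
  rcases eq_or_ne φ 0 with rfl | hφ
  · simp only [norm_zero, zero_pow two_ne_zero]; positivity
  have hφ2 : 0 < ‖φ‖ ^ 2 := by positivity
  refine le_of_mul_le_mul_right ?_ hφ2
  calc ‖φ‖ ^ 2 * ‖φ‖ ^ 2 = (‖φ‖ ^ 2) ^ 2 := (sq _).symm
    _ ≤ (M * ∑ i, ‖ψ i‖) ^ 2 :=
      pow_le_pow_left₀ hφ2.le (sq_norm_le_mul_sum_norm_of_sum_eq hψO hψ hM) 2
    _ = M ^ 2 * (∑ i, ‖ψ i‖) ^ 2 := mul_pow _ _ _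
    _ ≤ M ^ 2 * (Fintype.card ι * ∑ i, ‖ψ i‖ ^ 2) := by
      gcongr
      exact sq_sum_le_card_mul_sum_sq
    _ ≤ M ^ 2 * (Fintype.card ι * (c ^ 2 * ‖φ‖ ^ 2)) := by gcongr
    _ = Fintype.card ι * c ^ 2 * M ^ 2 * ‖φ‖ ^ 2 := by ring

end StableDecomposition

theorem Real.le_sqrt_one_sub_inv_mul {x a b C : ℝ} (ha : 0 ≤ a) (hx : x ^ 2 ≤ a ^ 2 - b ^ 2)
    (hC : a ^ 2 ≤ C * b ^ 2) : x ≤ √(1 - 1 / C) * a := by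
  have hsq : x ^ 2 ≤ (1 - 1 / C) * a ^ 2 := by
    rcases le_or_gt C 0 with hC0 | hC0
    · have ha0 : a ^ 2 = 0 := by
        nlinarith [mul_nonpos_of_nonpos_of_nonneg hC0 (sq_nonneg b), sq_nonneg a]
      rw [ha0, mul_zero]
      nlinarith [sq_nonneg b]
    · have : a ^ 2 / C ≤ b ^ 2 := by rwa [div_le_iff₀ hC0, mul_comm]
      linarith [show (1 - 1 / C) * a ^ 2 = a ^ 2 - a ^ 2 / C by ring]
  calc x ≤ √((1 - 1 / C) * a ^ 2) := Real.le_sqrt_of_sq_le hsq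
    _ = √(1 - 1 / C) * a := by rw [Real.sqrt_mul' _ (sq_nonneg a), Real.sqrt_sq ha]

theorem residual_enrichment_one_step_contraction_general
    {H : Type*} [NormedAddCommGroup H] [InnerProductSpace ℝ H]
    (u : H) (N : ℕ) (O : Fin N → Submodule ℝ H) [∀ i, CompleteSpace (O i)]
    (c_pu : ℝ)
    (hpu : ∀ φ : H, ∃ ψ : Fin N → H, (∀ i, ψ i ∈ O i) ∧ (∑ i, ψ i) = φ ∧
      ∑ i, ‖ψ i‖ ^ 2 ≤ c_pu ^ 2 * ‖φ‖ ^ 2)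
    (W : Submodule ℝ H) [FiniteDimensional ℝ W]
    (k : Fin N)
    (hk : ∀ i, ‖(Submodule.orthogonalProjectionOnto (O i) (u - (Submodule.orthogonalProjectionOnto W u : H)) : H)‖ ≤
      ‖(Submodule.orthogonalProjectionOnto (O k) (u - (Submodule.orthogonalProjectionOnto W u : H)) : H)‖) :
    ‖u - (Submodule.orthogonalProjectionOnto
        (W ⊔ Submodule.span ℝ
          {((Submodule.orthogonalProjectionOnto (O k) (u - (Submodule.orthogonalProjectionOnto W u : H)) : H))}) u : H)‖ ≤
      Real.sqrt (1 - 1 / (N * c_pu ^ 2)) * ‖u - (Submodule.orthogonalProjectionOnto W u : H)‖ := by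
  simp only [← Submodule.starProjection_apply] at hk ⊢
  set e := u - W.starProjection u
  set v := (O k).starProjection e
  have hbest : ‖u - (W ⊔ Submodule.span ℝ {v}).starProjection u‖ ≤ ‖e - v‖ :=
    W.norm_sub_starProjection_sup_span_le u v
  have hpyth : ‖e - v‖ ^ 2 = ‖e‖ ^ 2 - ‖v‖ ^ 2 := (O k).norm_sq_sub_starProjection e
  obtain ⟨ψ, hψO, hψ, hstab⟩ := hpu e
  have hkey : ‖e‖ ^ 2 ≤ N * c_pu ^ 2 * ‖v‖ ^ 2 := by
    simpa only [Fintype.card_fin] using sq_norm_le_card_mul_of_stable_decomposition hψO hψ hstab hk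
  refine Real.le_sqrt_one_sub_inv_mul (norm_nonneg e) ?_ hkey
  rw [← hpyth]
  exact pow_le_pow_left₀ (norm_nonneg _) hbest 2

/-- Theorem 1 (exponential convergence of residual-based online enrichment),
one-step contraction form, in a real Hilbert space `H`.
The subspaces `O i` satisfy the partition-of-unity stability property with
constant `c_pu > 0`; `W` is a finite-dimensional reduced space, `e := u - P_W u`
the error, `k` maximizes `‖P_{O i} e‖`, and the enriched space is
`W' := W + span {P_{O k} e}`. -/
theorem residual_enrichment_one_step_contraction
    {H : Type*} [NormedAddCommGroup H] [InnerProductSpace ℝ H] [CompleteSpace H]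
    (u : H) (N : ℕ) (O : Fin N → Submodule ℝ H) [∀ i, CompleteSpace (O i)]
    (c_pu : ℝ) (hc_pu : 0 < c_pu)
    (hpu : ∀ φ : H, ∃ ψ : Fin N → H, (∀ i, ψ i ∈ O i) ∧ (∑ i, ψ i) = φ ∧
      ∑ i, ‖ψ i‖ ^ 2 ≤ c_pu ^ 2 * ‖φ‖ ^ 2)
    (W : Submodule ℝ H) [FiniteDimensional ℝ W]
    (k : Fin N)
    (hk : ∀ i, ‖(Submodule.orthogonalProjectionOnto (O i) (u - (Submodule.orthogonalProjectionOnto W u : H)) : H)‖ ≤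
      ‖(Submodule.orthogonalProjectionOnto (O k) (u - (Submodule.orthogonalProjectionOnto W u : H)) : H)‖) :
    ‖u - (Submodule.orthogonalProjectionOnto
        (W ⊔ Submodule.span ℝ
          {((Submodule.orthogonalProjectionOnto (O k) (u - (Submodule.orthogonalProjectionOnto W u : H)) : H))}) u : H)‖ ≤
      Real.sqrt (1 - 1 / (N * c_pu ^ 2)) * ‖u - (Submodule.orthogonalProjectionOnto W u : H)‖ :=
  residual_enrichment_one_step_contraction_general u N O c_pu hpu W k hk
end

section
/- Let H be a real Hilbert space, u ∈ H, W a finite-dimensional subspace of H, and O a complete (closed) subspace of H. Set e := u − P_W u and û := P_O e, and let W' := W + span{û}. Then ‖u − P_{W'} u‖² ≤ ‖u − P_W u‖² − ‖û‖². -/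
/-! The candidate `P_W u + û` lies in `W ⊔ span {û}`, so by minimality of the projection the new
error is at most `‖u - P_W u - û‖ = ‖e - P_O e‖`, and Pythagoras gives
`‖e - P_O e‖² = ‖e‖² - ‖P_O e‖²`. -/

namespace Submodule

variable {𝕜 E : Type*} [RCLike 𝕜] [NormedAddCommGroup E] [InnerProductSpace 𝕜 E]
  {K : Submodule 𝕜 E} [K.HasOrthogonalProjection]

theorem norm_sub_starProjection_le_s2 (u : E) {x : E} (hx : x ∈ K) :
    ‖u - K.starProjection u‖ ≤ ‖u - x‖ := by
  rw [starProjection_minimal]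
  exact ciInf_le ⟨0, Set.forall_mem_range.2 fun _ ↦ norm_nonneg _⟩ (⟨x, hx⟩ : K)

theorem norm_sub_starProjection_sq (u : E) :
    ‖u - K.starProjection u‖ ^ 2 = ‖u‖ ^ 2 - ‖K.starProjection u‖ ^ 2 := by
  rw [norm_sq_eq_add_norm_sq_starProjection u K, starProjection_orthogonal_val]
  ring

end Submodule

open Submodule

theorem one_step_error_reduction_general
    {H : Type*} [NormedAddCommGroup H] [InnerProductSpace ℝ H]
    (u : H) (W : Submodule ℝ H) [FiniteDimensional ℝ W]
    (O : Submodule ℝ H) [CompleteSpace O] :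
    ‖u - (Submodule.orthogonalProjectionOnto
        (W ⊔ Submodule.span ℝ
          {((Submodule.orthogonalProjectionOnto O (u - (Submodule.orthogonalProjectionOnto W u : H)) : H))}) u : H)‖ ^ 2 ≤
      ‖u - (Submodule.orthogonalProjectionOnto W u : H)‖ ^ 2 -
        ‖(Submodule.orthogonalProjectionOnto O (u - (Submodule.orthogonalProjectionOnto W u : H)) : H)‖ ^ 2 := by
  simp only [coe_orthogonalProjectionOnto_apply]
  set e := u - W.starProjection u
  set û := O.starProjection e
  have h_mem : W.starProjection u + û ∈ W ⊔ span ℝ {û} :=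
    add_mem_sup (coe_mem _) (mem_span_singleton_self û)
  calc ‖u - (W ⊔ span ℝ {û}).starProjection u‖ ^ 2
      ≤ ‖u - (W.starProjection u + û)‖ ^ 2 := by gcongr; exact norm_sub_starProjection_le_s2 u h_mem
    _ = ‖e - û‖ ^ 2 := by rw [sub_add_eq_sub_sub]
    _ = ‖e‖ ^ 2 - ‖û‖ ^ 2 := norm_sub_starProjection_sq e

/-- One-step error-reduction inequality (equation (9)):
enriching a finite-dimensional reduced space `W` by the orthogonal projection
`û := P_O (u - P_W u)` of the error onto a complete subspace `O` reduces the
squared error by at least `‖û‖²`. -/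
theorem one_step_error_reduction
    {H : Type*} [NormedAddCommGroup H] [InnerProductSpace ℝ H] [CompleteSpace H]
    (u : H) (W : Submodule ℝ H) [FiniteDimensional ℝ W]
    (O : Submodule ℝ H) [CompleteSpace O] :
    ‖u - (Submodule.orthogonalProjectionOnto
        (W ⊔ Submodule.span ℝ
          {((Submodule.orthogonalProjectionOnto O (u - (Submodule.orthogonalProjectionOnto W u : H)) : H))}) u : H)‖ ^ 2 ≤
      ‖u - (Submodule.orthogonalProjectionOnto W u : H)‖ ^ 2 -
        ‖(Submodule.orthogonalProjectionOnto O (u - (Submodule.orthogonalProjectionOnto W u : H)) : H)‖ ^ 2 :=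
  one_step_error_reduction_general u W O
end

section
/- Let H be a real Hilbert space and let O_1, …, O_N be complete (closed) subspaces of H satisfying the partition-of-unity stability property with constant c_pu > 0, i.e. every φ ∈ H can be written φ = Σ_{i=1}^N φ_i with φ_i ∈ O_i and Σ_{i=1}^N ‖φ_i‖² ≤ c_pu² ‖φ‖². Then for every r ∈ H: ‖r‖² ≤ c_pu² · Σ_{i=1}^N ‖P_{O_i} r‖². -/
/-! Write `r = ∑ ψ i` with `ψ i ∈ O i` as the stability hypothesis allows. Since `r - P_{O i} r ⊥ O i`,
`‖r‖² = ∑ ⟪P_{O i} r, ψ i⟫`, and Cauchy–Schwarz (in `H`, then in `ℝ^N`) bounds this by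
`(∑ ‖P_{O i} r‖²)^{1/2} (∑ ‖ψ i‖²)^{1/2} ≤ (∑ ‖P_{O i} r‖²)^{1/2} c_pu ‖r‖`; divide by `‖r‖`. -/

open Finset RealInnerProductSpace

section

variable {H ι : Type*} [NormedAddCommGroup H] [InnerProductSpace ℝ H] [Fintype ι]
  {K : ι → Submodule ℝ H} [∀ i, (K i).HasOrthogonalProjection] {ψ : ι → H} {r : H}

theorem norm_sq_eq_sum_inner_orthogonalProjectionOnto (hψ : ∀ i, ψ i ∈ K i) (hr : ∑ i, ψ i = r) :
    ‖r‖ ^ 2 = ∑ i, ⟪((K i).orthogonalProjectionOnto r : H), ψ i⟫ := by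
  conv_lhs => rw [← real_inner_self_eq_norm_sq, ← hr, inner_sum, hr]
  refine sum_congr rfl fun i _ => ?_
  exact (Submodule.inner_orthogonalProjectionOnto_eq_of_mem_right ⟨ψ i, hψ i⟩ r).symm

theorem sq_norm_sq_le_sum_norm_orthogonalProjectionOnto_sq_mul (hψ : ∀ i, ψ i ∈ K i)
    (hr : ∑ i, ψ i = r) :
    (‖r‖ ^ 2) ^ 2 ≤
      (∑ i, ‖((K i).orthogonalProjectionOnto r : H)‖ ^ 2) * ∑ i, ‖ψ i‖ ^ 2 :=
  calc (‖r‖ ^ 2) ^ 2 ≤ (∑ i, ‖((K i).orthogonalProjectionOnto r : H)‖ * ‖ψ i‖) ^ 2 := by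
        gcongr
        rw [norm_sq_eq_sum_inner_orthogonalProjectionOnto hψ hr]
        exact sum_le_sum fun i _ => real_inner_le_norm _ _
    _ ≤ (∑ i, ‖((K i).orthogonalProjectionOnto r : H)‖ ^ 2) * ∑ i, ‖ψ i‖ ^ 2 :=
        sum_mul_sq_le_sq_mul_sq _ _ _

end

theorem norm_sq_le_cpu_sq_mul_sum_proj_sq_general
    {H : Type*} [NormedAddCommGroup H] [InnerProductSpace ℝ H]
    (N : ℕ) (O : Fin N → Submodule ℝ H) [∀ i, CompleteSpace (O i)]
    (c_pu : ℝ)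
    (hpu : ∀ φ : H, ∃ ψ : Fin N → H, (∀ i, ψ i ∈ O i) ∧ (∑ i, ψ i) = φ ∧
      ∑ i, ‖ψ i‖ ^ 2 ≤ c_pu ^ 2 * ‖φ‖ ^ 2)
    (r : H) :
    ‖r‖ ^ 2 ≤ c_pu ^ 2 * ∑ i, ‖((O i).orthogonalProjectionOnto r : H)‖ ^ 2 := by
  obtain ⟨ψ, hψ, hr, hstab⟩ := hpu r
  set S := ∑ i, ‖((O i).orthogonalProjectionOnto r : H)‖ ^ 2
  rcases (sq_nonneg ‖r‖).eq_or_lt with hr0 | hrpos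
  · rw [← hr0]
    positivity
  refine le_of_mul_le_mul_right ?_ hrpos
  calc ‖r‖ ^ 2 * ‖r‖ ^ 2 = (‖r‖ ^ 2) ^ 2 := (sq _).symm
    _ ≤ S * ∑ i, ‖ψ i‖ ^ 2 := sq_norm_sq_le_sum_norm_orthogonalProjectionOnto_sq_mul hψ hr
    _ ≤ S * (c_pu ^ 2 * ‖r‖ ^ 2) := by gcongr
    _ = c_pu ^ 2 * S * ‖r‖ ^ 2 := by ring

/-- Localization estimate (equation (11), Proposition 5.1 of Buhr et al. 2017):
if the complete subspaces `O i` satisfy the partition-of-unity stability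
property with constant `c_pu > 0`, then
`‖r‖² ≤ c_pu² ∑ i ‖P_{O i} r‖²` for every `r ∈ H`. -/
theorem norm_sq_le_cpu_sq_mul_sum_proj_sq
    {H : Type*} [NormedAddCommGroup H] [InnerProductSpace ℝ H] [CompleteSpace H]
    (N : ℕ) (O : Fin N → Submodule ℝ H) [∀ i, CompleteSpace (O i)]
    (c_pu : ℝ) (hc_pu : 0 < c_pu)
    (hpu : ∀ φ : H, ∃ ψ : Fin N → H, (∀ i, ψ i ∈ O i) ∧ (∑ i, ψ i) = φ ∧
      ∑ i, ‖ψ i‖ ^ 2 ≤ c_pu ^ 2 * ‖φ‖ ^ 2)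
    (r : H) :
    ‖r‖ ^ 2 ≤ c_pu ^ 2 * ∑ i, ‖((O i).orthogonalProjectionOnto r : H)‖ ^ 2 :=
  norm_sq_le_cpu_sq_mul_sum_proj_sq_general N O c_pu hpu r
end

section
/- Let H be a real Hilbert space and let O_1, …, O_N be complete (closed) subspaces of H satisfying the partition-of-unity stability property with constant c_pu > 0. Let r ∈ H and let k ∈ {1,…,N} be an index such that ‖P_{O_k} r‖ ≥ ‖P_{O_i} r‖ for all i = 1,…,N. Then ‖P_{O_k} r‖² ≥ (1/(N · c_pu²)) · ‖r‖². -/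
/-!
Write `r = ∑ ψᵢ` with `ψᵢ ∈ Oᵢ` as in the stability property. Since `r - P_{Oᵢ} r ⊥ Oᵢ`,
`‖r‖² = ∑ ⟪P_{Oᵢ} r, ψᵢ⟫ ≤ ‖P_{O_k} r‖ ∑ ‖ψᵢ‖`, and Cauchy–Schwarz in `ℝᴺ` bounds
`(∑ ‖ψᵢ‖)²` by `N ∑ ‖ψᵢ‖² ≤ N c_pu² ‖r‖²`. Squaring the first bound and cancelling `‖r‖²`
gives `‖r‖² ≤ N c_pu² ‖P_{O_k} r‖²`.
-/

open Finset RealInnerProductSpace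

section Decomposition

variable {H : Type*} [NormedAddCommGroup H] [InnerProductSpace ℝ H]
  {ι : Type*} [Fintype ι] (O : ι → Submodule ℝ H) [∀ i, (O i).HasOrthogonalProjection]

theorem norm_sq_le_sum_norm_starProjection_mul_norm {r : H} {ψ : ι → H}
    (hψ : ∀ i, ψ i ∈ O i) (hsum : ∑ i, ψ i = r) :
    ‖r‖ ^ 2 ≤ ∑ i, ‖(O i).starProjection r‖ * ‖ψ i‖ := by
  have hinner : ∀ i, ⟪r, ψ i⟫ = ⟪(O i).starProjection r, ψ i⟫ := fun i =>
    ((O i).inner_orthogonalProjectionOnto_eq_of_mem_right ⟨ψ i, hψ i⟩ r).symm.trans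
      ((O i).coe_inner _ _)
  calc ‖r‖ ^ 2 = ⟪r, ∑ i, ψ i⟫ := by rw [hsum, real_inner_self_eq_norm_sq]
    _ = ∑ i, ⟪(O i).starProjection r, ψ i⟫ := by simp only [inner_sum, hinner]
    _ ≤ ∑ i, ‖(O i).starProjection r‖ * ‖ψ i‖ := sum_le_sum fun i _ => real_inner_le_norm _ _

theorem norm_sq_le_card_mul_sq_mul_sq_of_sum_eq {r : H} {ψ : ι → H} {c M : ℝ}
    (hψ : ∀ i, ψ i ∈ O i) (hsum : ∑ i, ψ i = r)
    (hstab : ∑ i, ‖ψ i‖ ^ 2 ≤ c ^ 2 * ‖r‖ ^ 2) (hM : ∀ i, ‖(O i).starProjection r‖ ≤ M) :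
    ‖r‖ ^ 2 ≤ Fintype.card ι * c ^ 2 * M ^ 2 := by
  set S := ∑ i, ‖ψ i‖
  have hrS : ‖r‖ ^ 2 ≤ M * S := by
    rw [mul_sum]
    exact (norm_sq_le_sum_norm_starProjection_mul_norm O hψ hsum).trans <|
      sum_le_sum fun i _ => mul_le_mul_of_nonneg_right (hM i) (norm_nonneg _)
  have hS : S ^ 2 ≤ Fintype.card ι * (c ^ 2 * ‖r‖ ^ 2) := by
    grw [sq_sum_le_card_mul_sum_sq, card_univ, hstab]
  have hquartic : (‖r‖ ^ 2) ^ 2 ≤ (Fintype.card ι * c ^ 2 * M ^ 2) * ‖r‖ ^ 2 :=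
    calc (‖r‖ ^ 2) ^ 2 ≤ M ^ 2 * S ^ 2 := by
          rw [← mul_pow]; exact pow_le_pow_left₀ (by positivity) hrS 2
      _ ≤ M ^ 2 * (Fintype.card ι * (c ^ 2 * ‖r‖ ^ 2)) := by gcongr
      _ = (Fintype.card ι * c ^ 2 * M ^ 2) * ‖r‖ ^ 2 := by ring
  rcases (norm_nonneg r).eq_or_lt with hr | hr
  · rw [← hr, zero_pow two_ne_zero]; positivity
  · rw [sq (‖r‖ ^ 2)] at hquartic
    exact le_of_mul_le_mul_right hquartic (by positivity)

end Decomposition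

theorem max_local_proj_sq_ge_general
    {H : Type*} [NormedAddCommGroup H] [InnerProductSpace ℝ H]
    (N : ℕ) (O : Fin N → Submodule ℝ H) [∀ i, CompleteSpace (O i)]
    (c_pu : ℝ)
    (hpu : ∀ φ : H, ∃ ψ : Fin N → H, (∀ i, ψ i ∈ O i) ∧ (∑ i, ψ i) = φ ∧
      ∑ i, ‖ψ i‖ ^ 2 ≤ c_pu ^ 2 * ‖φ‖ ^ 2)
    (r : H) (k : Fin N)
    (hk : ∀ i, ‖(Submodule.orthogonalProjectionOnto (O i) r : H)‖ ≤
      ‖(Submodule.orthogonalProjectionOnto (O k) r : H)‖) :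
    1 / (N * c_pu ^ 2) * ‖r‖ ^ 2 ≤ ‖(Submodule.orthogonalProjectionOnto (O k) r : H)‖ ^ 2 := by
  obtain ⟨ψ, hψ, hsum, hstab⟩ := hpu r
  have hr := norm_sq_le_card_mul_sq_mul_sq_of_sum_eq O hψ hsum hstab hk
  rw [Fintype.card_fin, mul_comm] at hr
  rw [one_div_mul_eq_div]
  exact div_le_of_le_mul₀ (by positivity) (sq_nonneg _) hr

/-- Equations (10)–(13) combined: under the partition-of-unity stability
property with constant `c_pu > 0`, the maximal local projection of `r`
satisfies `‖P_{O k} r‖² ≥ (1/(N c_pu²)) ‖r‖²`. -/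
theorem max_local_proj_sq_ge
    {H : Type*} [NormedAddCommGroup H] [InnerProductSpace ℝ H] [CompleteSpace H]
    (N : ℕ) (O : Fin N → Submodule ℝ H) [∀ i, CompleteSpace (O i)]
    (c_pu : ℝ) (hc_pu : 0 < c_pu)
    (hpu : ∀ φ : H, ∃ ψ : Fin N → H, (∀ i, ψ i ∈ O i) ∧ (∑ i, ψ i) = φ ∧
      ∑ i, ‖ψ i‖ ^ 2 ≤ c_pu ^ 2 * ‖φ‖ ^ 2)
    (r : H) (k : Fin N)
    (hk : ∀ i, ‖(Submodule.orthogonalProjectionOnto (O i) r : H)‖ ≤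
      ‖(Submodule.orthogonalProjectionOnto (O k) r : H)‖) :
    1 / (N * c_pu ^ 2) * ‖r‖ ^ 2 ≤ ‖(Submodule.orthogonalProjectionOnto (O k) r : H)‖ ^ 2 :=
  max_local_proj_sq_ge_general N O c_pu hpu r k hk
end

section
/- Let d ≥ 1 and let κ : ℝ^d → ℝ be measurable with 0 < κ_min ≤ κ(x) ≤ κ_max for all x. Let ρ_1, …, ρ_N : ℝ^d → ℝ be differentiable functions with |ρ_i(x)| ≤ M_ρ and ‖∇ρ_i(x)‖ ≤ M_∇ for all i and x, such that every x ∈ ℝ^d satisfies ρ_i(x) ≠ 0 or ∇ρ_i(x) ≠ 0 for at most J indices i. Let φ : ℝ^d → ℝ be differentiable, with x ↦ φ(x)², x ↦ κ(x)‖∇φ(x)‖², and each x ↦ κ(x)‖∇(ρ_i φ)(x)‖² integrable with respect to Lebesgue measure, and suppose the Friedrichs inequality ∫ φ(x)² dx ≤ c_f ∫ ‖∇φ(x)‖² dx holds. Then Σ_{i=1}^N ∫ κ(x) ‖∇(ρ_i φ)(x)‖² dx ≤ 2J · ( c_f (κ_max/κ_min) M_∇² + M_ρ² ) · ∫ κ(x)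 ‖∇φ(x)‖² dx. -/
/-!
Pointwise, the product rule and `(a + b)² ≤ 2(a² + b²)` give
`‖∇(ρᵢφ)‖² ≤ 2(M_∇² φ² + M_ρ² ‖∇φ‖²)`, and at most `J` of these terms are nonzero at any point.
Integrating against `κ ≤ κ_max`, it remains to bound `∫ φ²` by the Friedrichs inequality and
`∫ ‖∇φ‖² ≤ κ_min⁻¹ ∫ κ ‖∇φ‖²`.
-/

open MeasureTheory

theorem Finset.sum_le_ncard_mul {ι : Type*} [Fintype ι] {f : ι → ℝ} {s : Set ι} {c : ℝ}
    {J : ℕ} (hzero : ∀ i ∉ s, f i = 0) (hle : ∀ i ∈ s, f i ≤ c) (hc : 0 ≤ c)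
    (hs : s.ncard ≤ J) : ∑ i, f i ≤ J * c := by
  classical
  calc ∑ i, f i = ∑ i ∈ s.toFinset, f i :=
        (Finset.sum_subset (Finset.subset_univ _) fun i _ hi => hzero i (by simpa using hi)).symm
    _ ≤ s.toFinset.card • c := Finset.sum_le_card_nsmul _ _ _ fun i hi => hle i (by simpa using hi)
    _ = s.ncard * c := by rw [nsmul_eq_mul, Set.ncard_eq_toFinset_card']
    _ ≤ J * c := by gcongr

section Pointwise

variable {E : Type*} [NormedAddCommGroup E] [NormedSpace ℝ E] {ρ φ : E → ℝ} {x : E}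

theorem norm_fderiv_mul_sq_le (hρ : DifferentiableAt ℝ ρ x) (hφ : DifferentiableAt ℝ φ x) :
    ‖fderiv ℝ (fun y => ρ y * φ y) x‖ ^ 2 ≤
      2 * (‖fderiv ℝ ρ x‖ ^ 2 * φ x ^ 2 + ρ x ^ 2 * ‖fderiv ℝ φ x‖ ^ 2) := by
  rw [fderiv_fun_mul hρ hφ]
  calc ‖ρ x • fderiv ℝ φ x + φ x • fderiv ℝ ρ x‖ ^ 2
      ≤ (|ρ x| * ‖fderiv ℝ φ x‖ + |φ x| * ‖fderiv ℝ ρ x‖) ^ 2 := by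
        gcongr
        refine (norm_add_le _ _).trans_eq ?_
        rw [norm_smul, norm_smul, Real.norm_eq_abs, Real.norm_eq_abs]
    _ ≤ 2 * ((|ρ x| * ‖fderiv ℝ φ x‖) ^ 2 + (|φ x| * ‖fderiv ℝ ρ x‖) ^ 2) := add_sq_le
    _ = 2 * (‖fderiv ℝ ρ x‖ ^ 2 * φ x ^ 2 + ρ x ^ 2 * ‖fderiv ℝ φ x‖ ^ 2) := by
        rw [mul_pow, mul_pow, sq_abs, sq_abs]; ring

theorem fderiv_mul_eq_zero_of_eq_zero (hρ : DifferentiableAt ℝ ρ x) (hφ : DifferentiableAt ℝ φ x)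
    (hρ0 : ρ x = 0) (hdρ0 : fderiv ℝ ρ x = 0) : fderiv ℝ (fun y => ρ y * φ y) x = 0 := by
  rw [fderiv_fun_mul hρ hφ, hρ0, hdρ0, zero_smul, smul_zero, add_zero]

theorem sum_norm_fderiv_mul_sq_le {ι : Type*} [Fintype ι] {ρ : ι → E → ℝ} {Mρ Mgrad : ℝ}
    {J : ℕ} (hρdiff : ∀ i, DifferentiableAt ℝ (ρ i) x) (hφ : DifferentiableAt ℝ φ x)
    (hρ : ∀ i, |ρ i x| ≤ Mρ) (hgradρ : ∀ i, ‖fderiv ℝ (ρ i) x‖ ≤ Mgrad)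
    (hJ : {i | ρ i x ≠ 0 ∨ fderiv ℝ (ρ i) x ≠ 0}.ncard ≤ J) :
    ∑ i, ‖fderiv ℝ (fun y => ρ i y * φ y) x‖ ^ 2 ≤
      2 * J * (Mgrad ^ 2 * φ x ^ 2 + Mρ ^ 2 * ‖fderiv ℝ φ x‖ ^ 2) := by
  rw [mul_comm 2, mul_assoc]
  refine Finset.sum_le_ncard_mul (fun i hi => ?_) (fun i _ => ?_) (by positivity) hJ
  · simp only [Set.mem_ofPred_eq, not_or, not_not] at hi
    rw [fderiv_mul_eq_zero_of_eq_zero (hρdiff i) hφ hi.1 hi.2, norm_zero, zero_pow two_ne_zero]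
  · have hgrad_sq : ‖fderiv ℝ (ρ i) x‖ ^ 2 ≤ Mgrad ^ 2 :=
      pow_le_pow_left₀ (norm_nonneg _) (hgradρ i) 2
    have hρ_sq : ρ i x ^ 2 ≤ Mρ ^ 2 := by
      rw [← sq_abs]; exact pow_le_pow_left₀ (abs_nonneg _) (hρ i) 2
    refine (norm_fderiv_mul_sq_le (hρdiff i) hφ).trans ?_
    gcongr

theorem sum_mul_norm_fderiv_mul_sq_le {ι : Type*} [Fintype ι] {ρ : ι → E → ℝ} {Mρ Mgrad k kmax : ℝ}
    {J : ℕ} (hρdiff : ∀ i, DifferentiableAt ℝ (ρ i) x) (hφ : DifferentiableAt ℝ φ x)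
    (hρ : ∀ i, |ρ i x| ≤ Mρ) (hgradρ : ∀ i, ‖fderiv ℝ (ρ i) x‖ ≤ Mgrad)
    (hJ : {i | ρ i x ≠ 0 ∨ fderiv ℝ (ρ i) x ≠ 0}.ncard ≤ J) (hk0 : 0 ≤ k) (hk : k ≤ kmax) :
    ∑ i, k * ‖fderiv ℝ (fun y => ρ i y * φ y) x‖ ^ 2 ≤
      2 * J * (Mgrad ^ 2 * kmax * φ x ^ 2 + Mρ ^ 2 * (k * ‖fderiv ℝ φ x‖ ^ 2)) :=
  calc ∑ i, k * ‖fderiv ℝ (fun y => ρ i y * φ y) x‖ ^ 2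
      ≤ k * (2 * J * (Mgrad ^ 2 * φ x ^ 2 + Mρ ^ 2 * ‖fderiv ℝ φ x‖ ^ 2)) := by
        rw [← Finset.mul_sum]
        gcongr
        exact sum_norm_fderiv_mul_sq_le hρdiff hφ hρ hgradρ hJ
    _ = 2 * J * (Mgrad ^ 2 * k * φ x ^ 2 + Mρ ^ 2 * (k * ‖fderiv ℝ φ x‖ ^ 2)) := by ring
    _ ≤ _ := by gcongr

end Pointwise

section Weighted

variable {α : Type*} [MeasurableSpace α] {μ : Measure α} {κ g : α → ℝ} {κmin : ℝ}

theorem MeasureTheory.Integrable.of_mul_left_of_le (hκmin : 0 < κmin) (hκ : ∀ x, κmin ≤ κ x)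
    (hg : AEStronglyMeasurable g μ) (hκg : Integrable (fun x => κ x * g x) μ) :
    Integrable g μ := by
  refine (hκg.const_mul κmin⁻¹).mono hg (ae_of_all _ fun x => ?_)
  rw [norm_mul, norm_mul, ← mul_assoc, Real.norm_of_nonneg (inv_pos.2 hκmin).le,
    Real.norm_of_nonneg (hκmin.trans_le (hκ x)).le]
  exact le_mul_of_one_le_left (norm_nonneg _) ((one_le_inv_mul₀ hκmin).2 (hκ x))

theorem mul_integral_le_integral_mul (hκ : ∀ x, κmin ≤ κ x) (hg0 : 0 ≤ g)
    (hg : Integrable g μ) (hκg : Integrable (fun x => κ x * g x) μ) :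
    κmin * ∫ x, g x ∂μ ≤ ∫ x, κ x * g x ∂μ := by
  rw [← integral_const_mul]
  exact integral_mono (hg.const_mul κmin) hκg fun x => mul_le_mul_of_nonneg_right (hκ x) (hg0 x)

theorem integral_le_div_mul_integral_mul {u : α → ℝ} {c : ℝ} (hκmin : 0 < κmin)
    (hκ : ∀ x, κmin ≤ κ x) (hu0 : 0 ≤ u) (hg0 : 0 ≤ g) (hg : AEStronglyMeasurable g μ)
    (hκg : Integrable (fun x => κ x * g x) μ) (hug : ∫ x, u x ∂μ ≤ c * ∫ x, g x ∂μ) :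
    ∫ x, u x ∂μ ≤ c / κmin * ∫ x, κ x * g x ∂μ := by
  have hgi : Integrable g μ := hκg.of_mul_left_of_le hκmin hκ hg
  rcases le_or_gt 0 c with hc | hc
  · have hκmin_g := mul_integral_le_integral_mul hκ hg0 hgi hκg
    calc ∫ x, u x ∂μ ≤ c * ∫ x, g x ∂μ := hug
      _ ≤ c * ((∫ x, κ x * g x ∂μ) / κmin) := by gcongr; rwa [le_div_iff₀' hκmin]
      _ = c / κmin * ∫ x, κ x * g x ∂μ := by ring
  -- a negative constant forces `∫ g = 0`, hence `g = 0` a.e. and both sides vanish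
  · have hg_int_zero : ∫ x, g x ∂μ = 0 :=
      le_antisymm (by nlinarith [integral_nonneg (μ := μ) hu0]) (integral_nonneg hg0)
    have hg_ae : g =ᵐ[μ] 0 := (integral_eq_zero_iff_of_nonneg hg0 hgi).1 hg_int_zero
    have hκg_int_zero : ∫ x, κ x * g x ∂μ = 0 :=
      integral_eq_zero_of_ae (hg_ae.mono fun x hx => by simp [hx])
    simpa [hg_int_zero, hκg_int_zero] using hug

end Weighted

theorem cpu_upper_bound_general
    (d : ℕ)
    (κ : EuclideanSpace ℝ (Fin d) → ℝ)
    (κmin κmax : ℝ) (hκmin : 0 < κmin)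
    (hκ : ∀ x, κmin ≤ κ x ∧ κ x ≤ κmax)
    (N : ℕ) (ρ : Fin N → EuclideanSpace ℝ (Fin d) → ℝ)
    (hρdiff : ∀ i, Differentiable ℝ (ρ i))
    (Mρ : ℝ) (hρ : ∀ i x, |ρ i x| ≤ Mρ)
    (Mgrad : ℝ) (hgradρ : ∀ i x, ‖fderiv ℝ (ρ i) x‖ ≤ Mgrad)
    (J : ℕ)
    (hJ : ∀ x, ({i | ρ i x ≠ 0 ∨ fderiv ℝ (ρ i) x ≠ 0} : Set (Fin N)).ncard ≤ J)
    (φ : EuclideanSpace ℝ (Fin d) → ℝ) (hφ : Differentiable ℝ φ)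
    (hφ2int : Integrable (fun x => (φ x) ^ 2))
    (hgradint : Integrable (fun x => κ x * ‖fderiv ℝ φ x‖ ^ 2))
    (hprodint : ∀ i,
      Integrable (fun x => κ x * ‖fderiv ℝ (fun y => ρ i y * φ y) x‖ ^ 2))
    (c_f : ℝ)
    (hFriedrichs : ∫ x, (φ x) ^ 2 ≤ c_f * ∫ x, ‖fderiv ℝ φ x‖ ^ 2) :
    ∑ i : Fin N, ∫ x, κ x * ‖fderiv ℝ (fun y => ρ i y * φ y) x‖ ^ 2 ≤
      2 * (J : ℝ) * (c_f * (κmax / κmin) * Mgrad ^ 2 + Mρ ^ 2) *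
        ∫ x, κ x * ‖fderiv ℝ φ x‖ ^ 2 := by
  have hκmax : 0 ≤ κmax := hκmin.le.trans ((hκ 0).1.trans (hκ 0).2)
  have hfriedrichs_weighted := integral_le_div_mul_integral_mul hκmin (fun x => (hκ x).1)
    (fun x => sq_nonneg (φ x)) (fun x => sq_nonneg ‖fderiv ℝ φ x‖)
    ((measurable_fderiv ℝ φ).norm.pow_const 2).aestronglyMeasurable hgradint hFriedrichs
  calc ∑ i, ∫ x, κ x * ‖fderiv ℝ (fun y => ρ i y * φ y) x‖ ^ 2
      = ∫ x, ∑ i, κ x * ‖fderiv ℝ (fun y => ρ i y * φ y) x‖ ^ 2 :=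
        (integral_finsetSum _ fun i _ => hprodint i).symm
    _ ≤ ∫ x, 2 * J * (Mgrad ^ 2 * κmax * φ x ^ 2 + Mρ ^ 2 * (κ x * ‖fderiv ℝ φ x‖ ^ 2)) :=
        integral_mono (integrable_finsetSum _ fun i _ => hprodint i)
          (((hφ2int.const_mul _).add (hgradint.const_mul _)).const_mul _) fun x =>
            sum_mul_norm_fderiv_mul_sq_le (fun i => hρdiff i x) (hφ x) (fun i => hρ i x)
              (fun i => hgradρ i x) (hJ x) (hκmin.le.trans (hκ x).1) (hκ x).2
    _ = 2 * J * (Mgrad ^ 2 * κmax * (∫ x, φ x ^ 2) +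
          Mρ ^ 2 * ∫ x, κ x * ‖fderiv ℝ φ x‖ ^ 2) := by
        rw [integral_const_mul, integral_add (hφ2int.const_mul _) (hgradint.const_mul _),
          integral_const_mul, integral_const_mul]
    _ ≤ 2 * J * (Mgrad ^ 2 * κmax * (c_f / κmin * ∫ x, κ x * ‖fderiv ℝ φ x‖ ^ 2) +
          Mρ ^ 2 * ∫ x, κ x * ‖fderiv ℝ φ x‖ ^ 2) := by gcongr
    _ = _ := by ring

/-- Proposition (upper bound of `c_pu`):
`∑ i ∫ κ |∇(ρ_i φ)|² ≤ 2 J (c_f (κ_max/κ_min) (max_i ‖∇ρ_i‖_∞)² + (max_i ‖ρ_i‖_∞)²) ∫ κ |∇φ|²`,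
where `J` bounds the number of indices `i` with `ρ_i(x) ≠ 0` or `∇ρ_i(x) ≠ 0`
at any point `x`, and `c_f` is the Friedrichs constant. -/
theorem cpu_upper_bound
    (d : ℕ) (hd : 1 ≤ d)
    (κ : EuclideanSpace ℝ (Fin d) → ℝ) (hκm : Measurable κ)
    (κmin κmax : ℝ) (hκmin : 0 < κmin)
    (hκ : ∀ x, κmin ≤ κ x ∧ κ x ≤ κmax)
    (N : ℕ) (ρ : Fin N → EuclideanSpace ℝ (Fin d) → ℝ)
    (hρdiff : ∀ i, Differentiable ℝ (ρ i))
    (Mρ : ℝ) (hρ : ∀ i x, |ρ i x| ≤ Mρ)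
    (Mgrad : ℝ) (hgradρ : ∀ i x, ‖fderiv ℝ (ρ i) x‖ ≤ Mgrad)
    (J : ℕ)
    (hJ : ∀ x, ({i | ρ i x ≠ 0 ∨ fderiv ℝ (ρ i) x ≠ 0} : Set (Fin N)).ncard ≤ J)
    (φ : EuclideanSpace ℝ (Fin d) → ℝ) (hφ : Differentiable ℝ φ)
    (hφ2int : Integrable (fun x => (φ x) ^ 2))
    (hgradint : Integrable (fun x => κ x * ‖fderiv ℝ φ x‖ ^ 2))
    (hprodint : ∀ i,
      Integrable (fun x => κ x * ‖fderiv ℝ (fun y => ρ i y * φ y) x‖ ^ 2))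
    (c_f : ℝ)
    (hFriedrichs : ∫ x, (φ x) ^ 2 ≤ c_f * ∫ x, ‖fderiv ℝ φ x‖ ^ 2) :
    ∑ i : Fin N, ∫ x, κ x * ‖fderiv ℝ (fun y => ρ i y * φ y) x‖ ^ 2 ≤
      2 * (J : ℝ) * (c_f * (κmax / κmin) * Mgrad ^ 2 + Mρ ^ 2) *
        ∫ x, κ x * ‖fderiv ℝ φ x‖ ^ 2 :=
  cpu_upper_bound_general d κ κmin κmax hκmin hκ N ρ hρdiff Mρ hρ Mgrad hgradρ J hJ φ hφ hφ2int
    hgradint hprodint c_f hFriedrichs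
end

section
/- Let H be a real Hilbert space, u ∈ H, W a finite-dimensional subspace of H, and O_1, …, O_N complete (closed) subspaces of H such that each sum W + O_i is complete. For each i set u_i := P_{W + O_i} u, and let k ∈ {1,…,N} be an index such that ‖P_W u − u_k‖ ≥ ‖P_W u − u_i‖ for all i = 1,…,N. Then for every i ∈ {1,…,N} and every ψ ∈ O_i: ‖u − u_k‖ ≤ ‖u − P_{W + span{ψ}} u‖. -/
/-! For `W ≤ V`, Pythagoras gives `‖u - P_W u‖² = ‖u - P_V u‖² + ‖P_W u - P_V u‖²`, so among the
subspaces containing `W` a larger shift means a smaller error: `W ⊔ O k` has the smallest error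
among the `W ⊔ O i`, and `W ⊔ span {ψ} ≤ W ⊔ O i` can only do worse than `W ⊔ O i`. -/

open Submodule

namespace Submodule

variable {H : Type*} [NormedAddCommGroup H] [InnerProductSpace ℝ H]

theorem norm_sub_starProjection_sq_of_le (u : H) {W V : Submodule ℝ H}
    [W.HasOrthogonalProjection] [V.HasOrthogonalProjection] (hWV : W ≤ V) :
    ‖u - W.starProjection u‖ ^ 2 =
      ‖u - V.starProjection u‖ ^ 2 + ‖W.starProjection u - V.starProjection u‖ ^ 2 := by
  have hmem : V.starProjection u - W.starProjection u ∈ V :=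
    V.sub_mem (starProjection_apply_mem V u) (hWV (starProjection_apply_mem W u))
  have horth : inner ℝ (u - V.starProjection u) (V.starProjection u - W.starProjection u) = 0 :=
    starProjection_inner_eq_zero u _ hmem
  rw [← sub_add_sub_cancel u (V.starProjection u), norm_add_sq_real, horth,
    norm_sub_rev (V.starProjection u)]
  ring

theorem norm_sub_starProjection_le_of_le {V V' : Submodule ℝ H}
    [V.HasOrthogonalProjection] [V'.HasOrthogonalProjection] (h : V ≤ V') (u : H) :
    ‖u - V'.starProjection u‖ ≤ ‖u - V.starProjection u‖ := by
  rw [starProjection_minimal u]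
  have hbdd : BddBelow (Set.range fun x : V' => ‖u - x‖) := ⟨0, by rintro _ ⟨x, rfl⟩; positivity⟩
  exact ciInf_le hbdd ⟨_, h (starProjection_apply_mem V u)⟩

theorem norm_sub_starProjection_le_of_shift_le (u : H) {W V V' : Submodule ℝ H}
    [W.HasOrthogonalProjection] [V.HasOrthogonalProjection] [V'.HasOrthogonalProjection]
    (hV : W ≤ V) (hV' : W ≤ V')
    (hshift : ‖W.starProjection u - V.starProjection u‖ ≤
      ‖W.starProjection u - V'.starProjection u‖) :
    ‖u - V'.starProjection u‖ ≤ ‖u - V.starProjection u‖ := by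
  have hsq := pow_le_pow_left₀ (norm_nonneg _) hshift 2
  have hpyth := norm_sub_starProjection_sq_of_le u hV
  have hpyth' := norm_sub_starProjection_sq_of_le u hV'
  exact (sq_le_sq₀ (norm_nonneg _) (norm_nonneg _)).1 (by linarith)

end Submodule

theorem globally_coupled_enrichment_optimal_general
    {H : Type*} [NormedAddCommGroup H] [InnerProductSpace ℝ H]
    (u : H) (N : ℕ) (W : Submodule ℝ H) [FiniteDimensional ℝ W]
    (O : Fin N → Submodule ℝ H)
    [∀ i, CompleteSpace ↥(W ⊔ O i)]
    (k : Fin N)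
    (hk : ∀ i, ‖(Submodule.orthogonalProjectionOnto W u : H) - (Submodule.orthogonalProjectionOnto (W ⊔ O i) u : H)‖ ≤
      ‖(Submodule.orthogonalProjectionOnto W u : H) - (Submodule.orthogonalProjectionOnto (W ⊔ O k) u : H)‖) :
    ∀ i : Fin N, ∀ ψ ∈ O i,
      ‖u - (Submodule.orthogonalProjectionOnto (W ⊔ O k) u : H)‖ ≤
        ‖u - (Submodule.orthogonalProjectionOnto (W ⊔ Submodule.span ℝ {ψ}) u : H)‖ := by
  intro i ψ hψ
  have hspan : W ⊔ span ℝ {ψ} ≤ W ⊔ O i :=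
    sup_le_sup_left ((span_singleton_le_iff_mem ψ _).2 hψ) W
  calc ‖u - (W ⊔ O k).starProjection u‖
      ≤ ‖u - (W ⊔ O i).starProjection u‖ :=
        norm_sub_starProjection_le_of_shift_le u le_sup_left le_sup_left (hk i)
    _ ≤ ‖u - (W ⊔ span ℝ {ψ}).starProjection u‖ := norm_sub_starProjection_le_of_le hspan u

/-- Optimality of globally coupled online enrichment (Algorithm 2), inequality
part: the coupled solution `u_k = P_{W + O_k} u` selected to maximize the
solution shift `‖P_W u - u_i‖` has error at most that of any Galerkin solution
in `W + span {ψ}` for any `ψ` in any local space `O i`. -/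
theorem globally_coupled_enrichment_optimal
    {H : Type*} [NormedAddCommGroup H] [InnerProductSpace ℝ H] [CompleteSpace H]
    (u : H) (N : ℕ) (W : Submodule ℝ H) [FiniteDimensional ℝ W]
    (O : Fin N → Submodule ℝ H) [∀ i, CompleteSpace (O i)]
    [∀ i, CompleteSpace ↥(W ⊔ O i)]
    (k : Fin N)
    (hk : ∀ i, ‖(Submodule.orthogonalProjectionOnto W u : H) - (Submodule.orthogonalProjectionOnto (W ⊔ O i) u : H)‖ ≤
      ‖(Submodule.orthogonalProjectionOnto W u : H) - (Submodule.orthogonalProjectionOnto (W ⊔ O k) u : H)‖) :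
    ∀ i : Fin N, ∀ ψ ∈ O i,
      ‖u - (Submodule.orthogonalProjectionOnto (W ⊔ O k) u : H)‖ ≤
        ‖u - (Submodule.orthogonalProjectionOnto (W ⊔ Submodule.span ℝ {ψ}) u : H)‖ :=
  globally_coupled_enrichment_optimal_general u N W O k hk
end

section
/- Let H be a real Hilbert space, u ∈ H, W a finite-dimensional subspace of H, and O_1, …, O_N complete (closed) subspaces of H such that each sum W + O_i is complete. For each i set u_i := P_{W + O_i} u, and let k ∈ {1,…,N} be an index such that ‖P_W u − u_k‖ ≥ ‖P_W u − u_i‖ for all i = 1,…,N. Then there exists ψ ∈ O_k such that ‖u − P_{W + span{ψ}} u‖ = ‖u − u_k‖; consequently ‖u − u_k‖ equals the minimum over i ∈ {1,…,N} and ψ ∈ O_i of ‖u − P_{W + span{ψ}} u‖. -/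
/-!
Enlarging the space only decreases the projection error, and for subspaces containing `W`
Pythagoras gives `‖u - P_W u‖² = ‖u - P_K u‖² + ‖P_K u - P_W u‖²`, so the space `W ⊔ O k`
maximising `‖P_W u - P_{W ⊔ O i} u‖` minimises `‖u - P_{W ⊔ O i} u‖`; it beats every
`W ⊔ span {ψ}` with `ψ ∈ O i`. Conversely, writing `P_{W ⊔ O k} u = w + ψ` with `w ∈ W` and
`ψ ∈ O k`, the space `W ⊔ span {ψ}` already contains `P_{W ⊔ O k} u`.
-/

namespace Submodule

variable {𝕜 E : Type*} [RCLike 𝕜] [NormedAddCommGroup E] [InnerProductSpace 𝕜 E]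

theorem norm_sub_starProjection_le_of_mem {K : Submodule 𝕜 E} [K.HasOrthogonalProjection]
    (u : E) {v : E} (hv : v ∈ K) : ‖u - K.starProjection u‖ ≤ ‖u - v‖ := by
  rw [starProjection_minimal]
  exact ciInf_le ⟨0, Set.forall_mem_range.2 fun _ => norm_nonneg _⟩ (⟨v, hv⟩ : K)

theorem norm_sub_starProjection_le_of_le_s10 {K L : Submodule 𝕜 E} [K.HasOrthogonalProjection]
    [L.HasOrthogonalProjection] (hKL : K ≤ L) (u : E) :
    ‖u - L.starProjection u‖ ≤ ‖u - K.starProjection u‖ :=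
  norm_sub_starProjection_le_of_mem u (hKL (K.starProjection_apply_mem u))

theorem norm_sub_sq_eq_norm_sub_starProjection_sq_add {K : Submodule 𝕜 E}
    [K.HasOrthogonalProjection] (u : E) {v : E} (hv : v ∈ K) :
    ‖u - v‖ ^ 2 = ‖u - K.starProjection u‖ ^ 2 + ‖K.starProjection u - v‖ ^ 2 := by
  have horth : inner 𝕜 (K.starProjection u - v) (u - K.starProjection u) = 0 :=
    inner_right_of_mem_orthogonal (sub_mem (K.starProjection_apply_mem u) hv)
      (sub_starProjection_mem_orthogonal u)
  have := norm_add_sq_eq_norm_sq_add_norm_sq_of_inner_eq_zero _ _ horth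
  rw [sub_add_sub_cancel'] at this
  linear_combination this

theorem norm_sub_starProjection_le_of_norm_sub_le {K L : Submodule 𝕜 E}
    [K.HasOrthogonalProjection] [L.HasOrthogonalProjection] (u : E) {v : E} (hvK : v ∈ K)
    (hvL : v ∈ L) (h : ‖v - K.starProjection u‖ ≤ ‖v - L.starProjection u‖) :
    ‖u - L.starProjection u‖ ≤ ‖u - K.starProjection u‖ := by
  have hK := norm_sub_sq_eq_norm_sub_starProjection_sq_add u hvK
  have hL := norm_sub_sq_eq_norm_sub_starProjection_sq_add u hvL
  rw [norm_sub_rev v, norm_sub_rev v] at h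
  refine le_of_pow_le_pow_left₀ two_ne_zero (norm_nonneg _) ?_
  nlinarith [norm_nonneg (K.starProjection u - v)]

theorem norm_sub_starProjection_sup_le_sup_span (W : Submodule 𝕜 E) {O : Submodule 𝕜 E}
    [(W ⊔ O).HasOrthogonalProjection] {ψ : E} [(W ⊔ span 𝕜 {ψ}).HasOrthogonalProjection]
    (hψ : ψ ∈ O) (u : E) :
    ‖u - (W ⊔ O).starProjection u‖ ≤ ‖u - (W ⊔ span 𝕜 {ψ}).starProjection u‖ :=
  norm_sub_starProjection_le_of_le_s10 (sup_le_sup_left ((span_singleton_le_iff_mem ψ O).2 hψ) W) u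

theorem exists_mem_norm_sub_starProjection_sup_span_eq (W O : Submodule 𝕜 E)
    [FiniteDimensional 𝕜 W] [(W ⊔ O).HasOrthogonalProjection] (u : E) :
    ∃ ψ ∈ O, ‖u - (W ⊔ span 𝕜 {ψ}).starProjection u‖ = ‖u - (W ⊔ O).starProjection u‖ := by
  obtain ⟨w, hw, ψ, hψ, hsum⟩ := mem_sup.1 ((W ⊔ O).starProjection_apply_mem u)
  have hmem : (W ⊔ O).starProjection u ∈ W ⊔ span 𝕜 {ψ} :=
    hsum ▸ add_mem (mem_sup_left hw) (mem_sup_right (mem_span_singleton_self ψ))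
  exact ⟨ψ, hψ, le_antisymm (norm_sub_starProjection_le_of_mem u hmem)
    (norm_sub_starProjection_sup_le_sup_span W hψ u)⟩

end Submodule

open Submodule in
theorem globally_coupled_enrichment_attains_min_general
    {H : Type*} [NormedAddCommGroup H] [InnerProductSpace ℝ H]
    (u : H) (N : ℕ) (W : Submodule ℝ H) [FiniteDimensional ℝ W]
    (O : Fin N → Submodule ℝ H)
    [∀ i, CompleteSpace ↥(W ⊔ O i)]
    (k : Fin N)
    (hk : ∀ i, ‖(Submodule.orthogonalProjectionOnto W u : H) - (Submodule.orthogonalProjectionOnto (W ⊔ O i) u : H)‖ ≤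
      ‖(Submodule.orthogonalProjectionOnto W u : H) - (Submodule.orthogonalProjectionOnto (W ⊔ O k) u : H)‖) :
    (∃ ψ ∈ O k,
      ‖u - (Submodule.orthogonalProjectionOnto (W ⊔ Submodule.span ℝ {ψ}) u : H)‖ =
        ‖u - (Submodule.orthogonalProjectionOnto (W ⊔ O k) u : H)‖) ∧
    IsLeast {t : ℝ | ∃ i : Fin N, ∃ ψ ∈ O i,
        t = ‖u - (Submodule.orthogonalProjectionOnto (W ⊔ Submodule.span ℝ {ψ}) u : H)‖}
      ‖u - (Submodule.orthogonalProjectionOnto (W ⊔ O k) u : H)‖ := by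
  simp only [coe_orthogonalProjectionOnto_apply] at hk ⊢
  have hPW (i : Fin N) : W.starProjection u ∈ W ⊔ O i :=
    mem_sup_left (W.starProjection_apply_mem u)
  obtain ⟨ψ, hψ, hattain⟩ := exists_mem_norm_sub_starProjection_sup_span_eq W (O k) u
  refine ⟨⟨ψ, hψ, hattain⟩, ⟨k, ψ, hψ, hattain.symm⟩, ?_⟩
  rintro _ ⟨i, φ, hφ, rfl⟩
  calc ‖u - (W ⊔ O k).starProjection u‖
      ≤ ‖u - (W ⊔ O i).starProjection u‖ :=
        norm_sub_starProjection_le_of_norm_sub_le u (hPW i) (hPW k) (hk i)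
    _ ≤ ‖u - (W ⊔ span ℝ {φ}).starProjection u‖ := norm_sub_starProjection_sup_le_sup_span W hφ u

/-- Optimality of globally coupled online enrichment (Algorithm 2), attainment
part: there exists `ψ ∈ O k` whose span-enrichment achieves the error of the
full coupled solution `u_k = P_{W + O_k} u`; consequently `‖u - u_k‖` is the
minimum of `‖u - P_{W + span {ψ}} u‖` over all `i` and all `ψ ∈ O i`. -/
theorem globally_coupled_enrichment_attains_min
    {H : Type*} [NormedAddCommGroup H] [InnerProductSpace ℝ H] [CompleteSpace H]
    (u : H) (N : ℕ) (W : Submodule ℝ H) [FiniteDimensional ℝ W]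
    (O : Fin N → Submodule ℝ H) [∀ i, CompleteSpace (O i)]
    [∀ i, CompleteSpace ↥(W ⊔ O i)]
    (k : Fin N)
    (hk : ∀ i, ‖(Submodule.orthogonalProjectionOnto W u : H) - (Submodule.orthogonalProjectionOnto (W ⊔ O i) u : H)‖ ≤
      ‖(Submodule.orthogonalProjectionOnto W u : H) - (Submodule.orthogonalProjectionOnto (W ⊔ O k) u : H)‖) :
    (∃ ψ ∈ O k,
      ‖u - (Submodule.orthogonalProjectionOnto (W ⊔ Submodule.span ℝ {ψ}) u : H)‖ =
        ‖u - (Submodule.orthogonalProjectionOnto (W ⊔ O k) u : H)‖) ∧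
    IsLeast {t : ℝ | ∃ i : Fin N, ∃ ψ ∈ O i,
        t = ‖u - (Submodule.orthogonalProjectionOnto (W ⊔ Submodule.span ℝ {ψ}) u : H)‖}
      ‖u - (Submodule.orthogonalProjectionOnto (W ⊔ O k) u : H)‖ :=
  globally_coupled_enrichment_attains_min_general u N W O k hk
end

section
/- Let H be a real Hilbert space, u ∈ H, and let O_1, …, O_N be complete (closed) subspaces of H satisfying the partition-of-unity stability property with constant c_pu > 0. Let W be a finite-dimensional subspace of H such that each sum W + O_i is complete, set u_i := P_{W + O_i} u for each i, and let k ∈ {1,…,N} be an index such that ‖P_W u − u_k‖ ≥ ‖P_W u − u_i‖ for all i = 1,…,N. Then ‖u − u_k‖ ≤ c · ‖u − P_W u‖, where c := sqrt(1 − 1/(N · c_pu²)). -/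
/-!
Write `e := u - P_W u`, `v_i := P_{W+O_i} u` and `M := ‖v_k - P_W u‖`. Since `W ⊆ W + O_i`,
Pythagoras gives `‖e‖² = ‖u - v_i‖² + ‖v_i - P_W u‖²`, so it suffices to show `‖e‖² ≤ N c_pu² M²`.
Decompose `e = ∑ ψ_i` stably. As `u - v_i ⊥ O_i`, we get
`‖e‖² = ∑ ⟪e, ψ_i⟫ = ∑ ⟪v_i - P_W u, ψ_i⟫ ≤ M ∑ ‖ψ_i‖ ≤ M √N c_pu ‖e‖`,
the middle inequality by the maximality of `k` and the last by Cauchy–Schwarz.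
-/

open RealInnerProductSpace

namespace Submodule

variable {H : Type*} [NormedAddCommGroup H] [InnerProductSpace ℝ H]
  {K L : Submodule ℝ H} [K.HasOrthogonalProjection] [L.HasOrthogonalProjection]

theorem norm_sub_starProjection_sq_of_le_s13 (h : K ≤ L) (u : H) :
    ‖u - K.starProjection u‖ ^ 2 =
      ‖u - L.starProjection u‖ ^ 2 + ‖L.starProjection u - K.starProjection u‖ ^ 2 := by
  have horth : ⟪u - L.starProjection u, L.starProjection u - K.starProjection u⟫ = 0 :=
    inner_left_of_mem_orthogonal
      (L.sub_mem (L.starProjection_apply_mem u) (h (K.starProjection_apply_mem u)))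
      (L.sub_starProjection_mem_orthogonal u)
  rw [← sub_add_sub_cancel u (L.starProjection u), norm_add_sq_real, horth, mul_zero, add_zero]

theorem inner_sub_starProjection_eq_of_mem (u : H) {ψ : H} (hψ : ψ ∈ L) :
    ⟪u - K.starProjection u, ψ⟫ = ⟪L.starProjection u - K.starProjection u, ψ⟫ := by
  rw [← sub_add_sub_cancel u (L.starProjection u), inner_add_left,
    inner_left_of_mem_orthogonal hψ (L.sub_starProjection_mem_orthogonal u), zero_add]

end Submodule

theorem norm_sq_le_card_mul_sq_mul_sq_of_inner_le {H ι : Type*} [NormedAddCommGroup H]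
    [InnerProductSpace ℝ H] [Fintype ι] {e : H} {ψ : ι → H} {c M : ℝ} (hsum : ∑ i, ψ i = e)
    (hstab : ∑ i, ‖ψ i‖ ^ 2 ≤ c ^ 2 * ‖e‖ ^ 2) (hinner : ∀ i, ⟪e, ψ i⟫ ≤ M * ‖ψ i‖) :
    ‖e‖ ^ 2 ≤ Fintype.card ι * c ^ 2 * M ^ 2 := by
  have hlin : ‖e‖ ^ 2 ≤ M * ∑ i, ‖ψ i‖ := calc
    ‖e‖ ^ 2 = ∑ i, ⟪e, ψ i⟫ := by rw [← real_inner_self_eq_norm_sq, ← inner_sum, hsum]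
    _ ≤ ∑ i, M * ‖ψ i‖ := Finset.sum_le_sum fun i _ => hinner i
    _ = M * ∑ i, ‖ψ i‖ := (Finset.mul_sum _ _ _).symm
  have hquad : ‖e‖ ^ 2 * ‖e‖ ^ 2 ≤ (Fintype.card ι * c ^ 2 * M ^ 2) * ‖e‖ ^ 2 := calc
    ‖e‖ ^ 2 * ‖e‖ ^ 2 = (‖e‖ ^ 2) ^ 2 := (sq _).symm
    _ ≤ M ^ 2 * (∑ i, ‖ψ i‖) ^ 2 := by rw [← mul_pow]; exact pow_le_pow_left₀ (sq_nonneg _) hlin 2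
    _ ≤ M ^ 2 * (Fintype.card ι * ∑ i, ‖ψ i‖ ^ 2) := by
      gcongr; exact sq_sum_le_card_mul_sum_sq
    _ ≤ M ^ 2 * (Fintype.card ι * (c ^ 2 * ‖e‖ ^ 2)) := by gcongr
    _ = (Fintype.card ι * c ^ 2 * M ^ 2) * ‖e‖ ^ 2 := by ring
  rcases (sq_nonneg ‖e‖).eq_or_lt with he | he
  · rw [← he]; positivity
  · exact le_of_mul_le_mul_right hquad he

theorem le_sqrt_one_sub_one_div_mul_of_sq_eq_add_sq {a b r n : ℝ} (hr : 0 ≤ r)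
    (hn : 0 ≤ n) (hpyth : r ^ 2 = a ^ 2 + b ^ 2) (hbound : r ^ 2 ≤ n * b ^ 2) :
    a ≤ √(1 - 1 / n) * r := by
  rw [← Real.sqrt_sq hr, ← Real.sqrt_mul' _ (sq_nonneg r)]
  refine Real.le_sqrt_of_sq_le ?_
  have : r ^ 2 / n ≤ b ^ 2 := div_le_of_le_mul₀ hn (sq_nonneg b) (by linarith)
  rw [sub_mul, one_mul, one_div_mul_eq_div]
  linarith

theorem globally_coupled_one_step_contraction_general
    {H : Type*} [NormedAddCommGroup H] [InnerProductSpace ℝ H]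
    (u : H) (N : ℕ) (O : Fin N → Submodule ℝ H)
    (c_pu : ℝ)
    (hpu : ∀ φ : H, ∃ ψ : Fin N → H, (∀ i, ψ i ∈ O i) ∧ (∑ i, ψ i) = φ ∧
      ∑ i, ‖ψ i‖ ^ 2 ≤ c_pu ^ 2 * ‖φ‖ ^ 2)
    (W : Submodule ℝ H) [FiniteDimensional ℝ W]
    [∀ i, CompleteSpace ↥(W ⊔ O i)]
    (k : Fin N)
    (hk : ∀ i, ‖(Submodule.orthogonalProjectionOnto W u : H) - (Submodule.orthogonalProjectionOnto (W ⊔ O i) u : H)‖ ≤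
      ‖(Submodule.orthogonalProjectionOnto W u : H) - (Submodule.orthogonalProjectionOnto (W ⊔ O k) u : H)‖) :
    ‖u - (Submodule.orthogonalProjectionOnto (W ⊔ O k) u : H)‖ ≤
      Real.sqrt (1 - 1 / (N * c_pu ^ 2)) * ‖u - (Submodule.orthogonalProjectionOnto W u : H)‖ := by
  simp only [← Submodule.starProjection_apply] at hk ⊢
  set w := W.starProjection u
  set v := fun i => (W ⊔ O i).starProjection u
  obtain ⟨ψ, hψO, hψsum, hψstab⟩ := hpu (u - w)
  have hinner : ∀ i, ⟪u - w, ψ i⟫ ≤ ‖v k - w‖ * ‖ψ i‖ := fun i => calc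
    ⟪u - w, ψ i⟫ = ⟪v i - w, ψ i⟫ :=
      Submodule.inner_sub_starProjection_eq_of_mem u (Submodule.mem_sup_right (hψO i))
    _ ≤ ‖v i - w‖ * ‖ψ i‖ := real_inner_le_norm _ _
    _ ≤ ‖v k - w‖ * ‖ψ i‖ := by
      gcongr
      rw [norm_sub_rev, norm_sub_rev (v k)]
      exact hk i
  have hbound := norm_sq_le_card_mul_sq_mul_sq_of_inner_le hψsum hψstab hinner
  rw [Fintype.card_fin] at hbound
  exact le_sqrt_one_sub_one_div_mul_of_sq_eq_add_sq (norm_nonneg _) (by positivity)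
    (Submodule.norm_sub_starProjection_sq_of_le_s13 le_sup_left u) hbound

/-- One-step contraction for the globally coupled online enrichment
(Algorithm 2): under the partition-of-unity stability property with constant
`c_pu > 0`, the coupled solution `u_k = P_{W + O_k} u` maximizing the solution
shift satisfies `‖u - u_k‖ ≤ c ‖u - P_W u‖` with
`c = sqrt(1 - 1/(N c_pu²))`. -/
theorem globally_coupled_one_step_contraction
    {H : Type*} [NormedAddCommGroup H] [InnerProductSpace ℝ H] [CompleteSpace H]
    (u : H) (N : ℕ) (O : Fin N → Submodule ℝ H) [∀ i, CompleteSpace (O i)]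
    (c_pu : ℝ) (hc_pu : 0 < c_pu)
    (hpu : ∀ φ : H, ∃ ψ : Fin N → H, (∀ i, ψ i ∈ O i) ∧ (∑ i, ψ i) = φ ∧
      ∑ i, ‖ψ i‖ ^ 2 ≤ c_pu ^ 2 * ‖φ‖ ^ 2)
    (W : Submodule ℝ H) [FiniteDimensional ℝ W]
    [∀ i, CompleteSpace ↥(W ⊔ O i)]
    (k : Fin N)
    (hk : ∀ i, ‖(Submodule.orthogonalProjectionOnto W u : H) - (Submodule.orthogonalProjectionOnto (W ⊔ O i) u : H)‖ ≤
      ‖(Submodule.orthogonalProjectionOnto W u : H) - (Submodule.orthogonalProjectionOnto (W ⊔ O k) u : H)‖) :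
    ‖u - (Submodule.orthogonalProjectionOnto (W ⊔ O k) u : H)‖ ≤
      Real.sqrt (1 - 1 / (N * c_pu ^ 2)) * ‖u - (Submodule.orthogonalProjectionOnto W u : H)‖ :=
  globally_coupled_one_step_contraction_general u N O c_pu hpu W k hk
end

section
/- Let H be a real Hilbert space, u ∈ H, and let O_1, …, O_N be complete (closed) subspaces of H satisfying the partition-of-unity stability property with constant c_pu > 0. Let (W_n)_{n≥0} be a sequence of finite-dimensional subspaces of H defined recursively by W_0 = {0} and W_{n+1} = W_n + span{u^{(n)}_{k_n}}, where, assuming each W_n + O_i is complete, u^{(n)}_i := P_{W_n + O_i} u and the index k_n ∈ {1,…,N} satisfies ‖P_{W_n} u − u^{(n)}_{k_n}‖ ≥ ‖P_{W_n} u − u^{(n)}_i‖ for all i = 1,…,N. Then for all n ≥ 0: ‖u − P_{W_n} u‖ ≤ c^n · ‖u‖, where c := sqrt(1 − 1/(N · c_pu²)). -/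
/-!
Write `e = u - P_W u` and let `d` be the largest solution shift `‖P_W u - P_{W + O_i} u‖`.
Decompose `e = ∑ ψ i` stably with `ψ i ∈ O i`. Since `u - P_{W + O_i} u ⟂ O i`,
`‖e‖² = ∑ ⟪P_{W + O_i} u - P_W u, ψ i⟫ ≤ d ∑ ‖ψ i‖ ≤ d √N c_pu ‖e‖`, so `‖e‖² ≤ N c_pu² d²`.
As `P_W u ∈ W + O_k`, Pythagoras gives `‖u - P_{W + O_k} u‖² = ‖e‖² - d²`, and `P_{W + O_k} u` lies
in the enriched space, so each step multiplies the squared error by at most `1 - 1 / (N c_pu²)`.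
-/

open Submodule RealInnerProductSpace

section

variable {H : Type*} [NormedAddCommGroup H] [InnerProductSpace ℝ H]

/-- The partition-of-unity stability property of the family `O` with constant `c`. -/
def HasStableDecomposition {ι : Type*} [Fintype ι] (O : ι → Submodule ℝ H) (c : ℝ) :
    Prop :=
  ∀ φ : H, ∃ ψ : ι → H,
    (∀ i, ψ i ∈ O i) ∧ ∑ i, ψ i = φ ∧ ∑ i, ‖ψ i‖ ^ 2 ≤ c ^ 2 * ‖φ‖ ^ 2

theorem norm_sub_sq_eq_norm_sub_starProjection_sq_add (K : Submodule ℝ H)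
    [K.HasOrthogonalProjection] (y : H) {v : H} (hv : v ∈ K) :
    ‖y - v‖ ^ 2 = ‖y - K.starProjection y‖ ^ 2 + ‖K.starProjection y - v‖ ^ 2 := by
  have horth : ⟪y - K.starProjection y, K.starProjection y - v⟫ = 0 :=
    K.starProjection_inner_eq_zero y _ (K.sub_mem (K.starProjection_apply_mem y) hv)
  rw [← sub_add_sub_cancel y (K.starProjection y) v, norm_add_sq_real, horth]
  ring

theorem inner_sub_starProjection_eq_of_mem (K L : Submodule ℝ H) [K.HasOrthogonalProjection]
    [L.HasOrthogonalProjection] (y : H) {φ : H} (hφ : φ ∈ L) :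
    ⟪y - K.starProjection y, φ⟫ = ⟪L.starProjection y - K.starProjection y, φ⟫ := by
  rw [← sub_add_sub_cancel y (L.starProjection y), inner_add_left,
    L.starProjection_inner_eq_zero y φ hφ, zero_add]

theorem norm_sq_le_card_mul_of_sum_eq {ι : Type*} [Fintype ι] {e : H} {ψ : ι → H} {c d : ℝ}
    (hsum : ∑ i, ψ i = e) (hstable : ∑ i, ‖ψ i‖ ^ 2 ≤ c ^ 2 * ‖e‖ ^ 2)
    (hinner : ∀ i, ⟪e, ψ i⟫ ≤ d * ‖ψ i‖) :
    ‖e‖ ^ 2 ≤ Fintype.card ι * c ^ 2 * d ^ 2 := by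
  set S := ∑ i, ‖ψ i‖
  have hS : S ^ 2 ≤ Fintype.card ι * c ^ 2 * ‖e‖ ^ 2 := by
    calc S ^ 2 ≤ Fintype.card ι * ∑ i, ‖ψ i‖ ^ 2 := sq_sum_le_card_mul_sum_sq
      _ ≤ Fintype.card ι * (c ^ 2 * ‖e‖ ^ 2) := by gcongr
      _ = Fintype.card ι * c ^ 2 * ‖e‖ ^ 2 := by ring
  have he : ‖e‖ ^ 2 ≤ d * S := by
    calc ‖e‖ ^ 2 = ⟪e, ∑ i, ψ i⟫ := by rw [hsum, real_inner_self_eq_norm_sq]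
      _ = ∑ i, ⟪e, ψ i⟫ := inner_sum _ _ _
      _ ≤ ∑ i, d * ‖ψ i‖ := Finset.sum_le_sum fun i _ ↦ hinner i
      _ = d * S := (Finset.mul_sum _ _ _).symm
  have he4 : ‖e‖ ^ 2 * ‖e‖ ^ 2 ≤ (Fintype.card ι * c ^ 2 * d ^ 2) * ‖e‖ ^ 2 := by
    calc ‖e‖ ^ 2 * ‖e‖ ^ 2 = (‖e‖ ^ 2) ^ 2 := (sq _).symm
      _ ≤ (d * S) ^ 2 := pow_le_pow_left₀ (sq_nonneg _) he 2
      _ = d ^ 2 * S ^ 2 := mul_pow _ _ _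
      _ ≤ d ^ 2 * (Fintype.card ι * c ^ 2 * ‖e‖ ^ 2) := by gcongr
      _ = (Fintype.card ι * c ^ 2 * d ^ 2) * ‖e‖ ^ 2 := by ring
  rcases (sq_nonneg ‖e‖).eq_or_lt with he0 | he0
  · rw [← he0]
    positivity
  · exact le_of_mul_le_mul_right he4 he0

theorem norm_sub_starProjection_sq_le_card_mul {ι : Type*} [Fintype ι]
    {O : ι → Submodule ℝ H} {c : ℝ} (hpu : HasStableDecomposition O c)
    (K : Submodule ℝ H) [K.HasOrthogonalProjection]
    [∀ i, (K ⊔ O i).HasOrthogonalProjection] (y : H) {d : ℝ}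
    (hd : ∀ i, ‖K.starProjection y - (K ⊔ O i).starProjection y‖ ≤ d) :
    ‖y - K.starProjection y‖ ^ 2 ≤ Fintype.card ι * c ^ 2 * d ^ 2 := by
  obtain ⟨ψ, hψO, hsum, hstable⟩ := hpu (y - K.starProjection y)
  refine norm_sq_le_card_mul_of_sum_eq hsum hstable fun i ↦ ?_
  rw [inner_sub_starProjection_eq_of_mem K (K ⊔ O i) y (mem_sup_right (hψO i))]
  calc ⟪(K ⊔ O i).starProjection y - K.starProjection y, ψ i⟫
      ≤ ‖(K ⊔ O i).starProjection y - K.starProjection y‖ * ‖ψ i‖ := real_inner_le_norm _ _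
    _ ≤ d * ‖ψ i‖ := by
      rw [norm_sub_rev]
      exact mul_le_mul_of_nonneg_right (hd i) (norm_nonneg _)

theorem norm_sub_starProjection_sq_le_sub {K M L : Submodule ℝ H} [K.HasOrthogonalProjection]
    [M.HasOrthogonalProjection] [L.HasOrthogonalProjection] (y : H) (hKM : K ≤ M)
    (hML : M.starProjection y ∈ L) :
    ‖y - L.starProjection y‖ ^ 2 ≤
      ‖y - K.starProjection y‖ ^ 2 - ‖M.starProjection y - K.starProjection y‖ ^ 2 := by
  have hL := norm_sub_sq_eq_norm_sub_starProjection_sq_add L y hML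
  have hM :=
    norm_sub_sq_eq_norm_sub_starProjection_sq_add M y (hKM (K.starProjection_apply_mem y))
  nlinarith [sq_nonneg ‖L.starProjection y - M.starProjection y‖]

theorem norm_sub_starProjection_sq_le_of_max_shift {ι : Type*} [Fintype ι]
    {O : ι → Submodule ℝ H} {c : ℝ} (hpu : HasStableDecomposition O c)
    (K L : Submodule ℝ H) [K.HasOrthogonalProjection] [L.HasOrthogonalProjection]
    [∀ i, (K ⊔ O i).HasOrthogonalProjection] (y : H) {k : ι}
    (hk : ∀ i, ‖K.starProjection y - (K ⊔ O i).starProjection y‖ ≤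
      ‖K.starProjection y - (K ⊔ O k).starProjection y‖)
    (hL : (K ⊔ O k).starProjection y ∈ L) :
    ‖y - L.starProjection y‖ ^ 2 ≤
      (1 - 1 / (Fintype.card ι * c ^ 2)) * ‖y - K.starProjection y‖ ^ 2 := by
  have hshift := norm_sub_starProjection_sq_le_card_mul hpu K y hk
  have hdrop := norm_sub_starProjection_sq_le_sub y le_sup_left hL
  rw [norm_sub_rev ((K ⊔ O k).starProjection y)] at hdrop
  have hquot := div_le_of_le_mul₀ (by positivity) (sq_nonneg _) (hshift.trans_eq (mul_comm _ _))
  have hfactor : (1 - 1 / (Fintype.card ι * c ^ 2)) * ‖y - K.starProjection y‖ ^ 2 =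
      ‖y - K.starProjection y‖ ^ 2 - ‖y - K.starProjection y‖ ^ 2 / (Fintype.card ι * c ^ 2) := by
    ring
  linarith

theorem le_sqrt_pow_mul_of_sq_succ_le {a : ℕ → ℝ} {t : ℝ} (ha : ∀ n, 0 ≤ a n)
    (h : ∀ n, a (n + 1) ^ 2 ≤ t * a n ^ 2) (n : ℕ) : a n ≤ √t ^ n * a 0 := by
  induction n with
  | zero => simp
  | succ n ih =>
    have hstep : a (n + 1) ≤ √t * a n := by
      rw [← Real.sqrt_sq (ha n), ← Real.sqrt_mul' _ (sq_nonneg _)]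
      exact Real.le_sqrt_of_sq_le (h n)
    calc a (n + 1) ≤ √t * a n := hstep
      _ ≤ √t * (√t ^ n * a 0) := by gcongr
      _ = √t ^ (n + 1) * a 0 := by ring

end

theorem globally_coupled_enrichment_exponential_convergence_general
    {H : Type*} [NormedAddCommGroup H] [InnerProductSpace ℝ H]
    (u : H) (N : ℕ) (O : Fin N → Submodule ℝ H)
    (c_pu : ℝ)
    (hpu : ∀ φ : H, ∃ ψ : Fin N → H, (∀ i, ψ i ∈ O i) ∧ (∑ i, ψ i) = φ ∧
      ∑ i, ‖ψ i‖ ^ 2 ≤ c_pu ^ 2 * ‖φ‖ ^ 2)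
    (W : ℕ → Submodule ℝ H) [∀ n, FiniteDimensional ℝ (W n)]
    [∀ n i, CompleteSpace ↥(W n ⊔ O i)]
    (k : ℕ → Fin N)
    (hW0 : W 0 = ⊥)
    (hWsucc : ∀ n, W (n + 1) = W n ⊔ Submodule.span ℝ
      {((Submodule.orthogonalProjectionOnto (W n ⊔ O (k n)) u : H))})
    (hk : ∀ n i,
      ‖(Submodule.orthogonalProjectionOnto (W n) u : H) - (Submodule.orthogonalProjectionOnto (W n ⊔ O i) u : H)‖ ≤
      ‖(Submodule.orthogonalProjectionOnto (W n) u : H) - (Submodule.orthogonalProjectionOnto (W n ⊔ O (k n)) u : H)‖) :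
    ∀ n, ‖u - (Submodule.orthogonalProjectionOnto (W n) u : H)‖ ≤
      Real.sqrt (1 - 1 / (N * c_pu ^ 2)) ^ n * ‖u‖ := by
  have hstep (n : ℕ) : ‖u - (W (n + 1)).starProjection u‖ ^ 2 ≤
      (1 - 1 / (N * c_pu ^ 2)) * ‖u - (W n).starProjection u‖ ^ 2 := by
    have hmem : (W n ⊔ O (k n)).starProjection u ∈ W (n + 1) := by
      rw [hWsucc n]
      exact mem_sup_right (mem_span_singleton_self _)
    simpa only [Fintype.card_fin] using
      norm_sub_starProjection_sq_le_of_max_shift hpu (W n) (W (n + 1)) u (hk n) hmem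
  have hP0 : (W 0).starProjection u = 0 := by
    rw [← mem_bot ℝ, ← hW0]
    exact (W 0).starProjection_apply_mem u
  intro n
  have hbound :=
    le_sqrt_pow_mul_of_sq_succ_le (fun n ↦ norm_nonneg (u - (W n).starProjection u)) hstep n
  rwa [hP0, sub_zero] at hbound

/-- Corollary 2 in full: the exponential convergence bound of Theorem 1 /
Corollary 1 also holds for the globally coupled online enrichment algorithm
(Algorithm 2), which starts from `W 0 = ⊥` and in each step enriches by the
coupled solution `u⁽ⁿ⁾_{k n} = P_{W n + O_{k n}} u` maximizing the solution
shift `‖P_{W n} u - u⁽ⁿ⁾_i‖`. -/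
theorem globally_coupled_enrichment_exponential_convergence
    {H : Type*} [NormedAddCommGroup H] [InnerProductSpace ℝ H] [CompleteSpace H]
    (u : H) (N : ℕ) (O : Fin N → Submodule ℝ H) [∀ i, CompleteSpace (O i)]
    (c_pu : ℝ) (hc_pu : 0 < c_pu)
    (hpu : ∀ φ : H, ∃ ψ : Fin N → H, (∀ i, ψ i ∈ O i) ∧ (∑ i, ψ i) = φ ∧
      ∑ i, ‖ψ i‖ ^ 2 ≤ c_pu ^ 2 * ‖φ‖ ^ 2)
    (W : ℕ → Submodule ℝ H) [∀ n, FiniteDimensional ℝ (W n)]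
    [∀ n i, CompleteSpace ↥(W n ⊔ O i)]
    (k : ℕ → Fin N)
    (hW0 : W 0 = ⊥)
    (hWsucc : ∀ n, W (n + 1) = W n ⊔ Submodule.span ℝ
      {((Submodule.orthogonalProjectionOnto (W n ⊔ O (k n)) u : H))})
    (hk : ∀ n i,
      ‖(Submodule.orthogonalProjectionOnto (W n) u : H) - (Submodule.orthogonalProjectionOnto (W n ⊔ O i) u : H)‖ ≤
      ‖(Submodule.orthogonalProjectionOnto (W n) u : H) - (Submodule.orthogonalProjectionOnto (W n ⊔ O (k n)) u : H)‖) :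
    ∀ n, ‖u - (Submodule.orthogonalProjectionOnto (W n) u : H)‖ ≤
      Real.sqrt (1 - 1 / (N * c_pu ^ 2)) ^ n * ‖u‖ :=
  globally_coupled_enrichment_exponential_convergence_general u N O c_pu hpu W k hW0 hWsucc hk
end
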